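/- Let φ : (G,P) → (G',P') be a fibration of networks. Then the pullback map φ* : V(G',P') → V(G,P) between spaces of groupoid-invariant virtual vector fields is surjective, and its kernel is {w' ∈ V(G',P') : w'_{a'} = 0 for all a' in the essential image of φ}, where the essential image consists of the vertices a' of G' whose input network (I(a'),P'∘ξ_{a'}) is isomorphic to (I(φ(a)),P'∘ξ_{φ(a)}) for some vertex a of G. -/

import Mathlib

open Manifold

structure DGraph where
  V : Type
  E : Type
  src : E → V
  tgt : E → V

/-- A map of directed multigraphs: functions on edges and vertices commuting with
source and target. -/
structure GraphMap (G G' : DGraph) where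
  vmap : G.V → G'.V
  emap : G.E → G'.E
  src_eq : ∀ e, G'.src (emap e) = vmap (G.src e)
  tgt_eq : ∀ e, G'.tgt (emap e) = vmap (G.tgt e)

/-- `φ` is a graph fibration if for every vertex `a` of `G` and every edge `e'` of `G'`
with target `φ(a)`, there is a unique edge `e` of `G` with target `a` and `φ(e) = e'`. -/
def GraphMap.IsFibration {G G' : DGraph} (φ : GraphMap G G') : Prop :=
  ∀ (a : G.V) (e' : G'.E), G'.tgt e' = φ.vmap a →
    ∃! e : G.E, G.tgt e = a ∧ φ.emap e = e'

/-- The set of edges of `G` with target `a`. -/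
abbrev inEdges (G : DGraph) (a : G.V) : Type := {e : G.E // G.tgt e = a}

/-- The input tree `I(a)` of a vertex `a`: its vertices are `{a} ⊔ t⁻¹(a)` (the root `a`
is encoded as `none`, the leaf `γ ∈ t⁻¹(a)` as `some γ`), its edges are the pairs `(a, γ)`
for `γ ∈ t⁻¹(a)`, with source `γ` and target the root `a`. -/
def inputTree (G : DGraph) (a : G.V) : DGraph where
  V := Option (inEdges G a)
  E := inEdges G a
  src := fun γ => some γ
  tgt := fun _ => none

/-- An isomorphism of graphs is a graph map bijective on vertices and on edges. -/
def GraphMap.IsIso {G G' : DGraph} (φ : GraphMap G G') : Prop :=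
  Function.Bijective φ.vmap ∧ Function.Bijective φ.emap


/-- An isomorphism of input networks `(I(a), P ∘ ξ_a) → (I(a'), P' ∘ ξ_{a'})`.
Since any isomorphism of height-1 trees sends root to root and is determined by its
action on the leaves (equivalently, on the edges), it is given by a bijection `e` of the
sets of incoming edges; the network (phase-preserving) condition says that the root
phases agree (`hr`) and the phases of corresponding leaves agree (`hl`). -/
structure InputIso {ι : Type} (G : DGraph) (P : G.V → ι) (G' : DGraph) (P' : G'.V → ι)
    (a : G.V) (a' : G'.V) where
  e : inEdges G a ≃ inEdges G' a'
  hr : P' a' = P a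
  hl : ∀ γ : inEdges G a, P' (G'.src ((e γ) : inEdges G' a').1) = P (G.src γ.1)

/-- The identity isomorphism of an input network. -/
def InputIso.refl {ι : Type} (G : DGraph) (P : G.V → ι) (a : G.V) :
    InputIso G P G P a a :=
  ⟨Equiv.refl _, rfl, fun _ => rfl⟩

/-- Composition of isomorphisms of input networks. -/
def InputIso.comp {ι : Type} {G : DGraph} {P : G.V → ι} {G' : DGraph} {P' : G'.V → ι}
    {G'' : DGraph} {P'' : G''.V → ι} {a : G.V} {a' : G'.V} {a'' : G''.V}
    (σ : InputIso G P G' P' a a') (σ' : InputIso G' P' G'' P'' a' a'') :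
    InputIso G P G'' P'' a a'' :=
  ⟨σ.e.trans σ'.e, σ'.hr.trans σ.hr, fun γ => (σ'.hl (σ.e γ)).trans (σ.hl γ)⟩

/-- The inverse of an isomorphism of input networks. -/
def InputIso.inv {ι : Type} {G : DGraph} {P : G.V → ι} {G' : DGraph} {P' : G'.V → ι}
    {a : G.V} {a' : G'.V} (σ : InputIso G P G' P' a a') : InputIso G' P' G P a' a :=
  ⟨σ.e.symm, σ.hr.symm, fun γ' => by
    have h := σ.hl (σ.e.symm γ')
    rw [Equiv.apply_symm_apply] at h
    exact h.symm⟩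

variable {ι : Type} {EE : ι → Type} [∀ i, NormedAddCommGroup (EE i)]
  [∀ i, NormedSpace ℝ (EE i)] {HH : ι → Type} [∀ i, TopologicalSpace (HH i)]
  (II : ∀ i, ModelWithCorners ℝ (EE i) (HH i))
  (MM : ι → Type) [∀ i, TopologicalSpace (MM i)] [∀ i, ChartedSpace (HH i) (MM i)]
  [∀ i, IsManifold (II i) ((⊤ : ℕ∞) : WithTop ℕ∞) (MM i)]

/-- The total phase space `P I(a) = P(a) × ⊓_{γ ∈ t⁻¹(a)} P(s(γ))` of the input network
of the vertex `a` of the network `(G, P)` (phase spaces drawn from the family of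
manifolds `MM` via the index function `P : G.V → ι`). -/
abbrev PIn (G : DGraph) (P : G.V → ι) (a : G.V) : Type :=
  MM (P a) × ((γ : inEdges G a) → MM (P (G.src γ.1)))

/-- The underlying (not necessarily smooth) sections of the control space
`Ctrl(P I(a) → P a)`: maps `F` from `P I(a)` to the tangent bundle of `P a = P(a)` with
`F q ∈ T_{p(q)} P(a)`, where `p : P I(a) → P(a)` is the projection onto the root factor. -/
abbrev Raw (G : DGraph) (P : G.V → ι) (a : G.V) : Type :=
  (q : PIn MM G P a) → TangentSpace (II (P a)) q.1

/-- The model with corners for the manifold `P I(a)`. -/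
noncomputable def PInModel (G : DGraph) [Fintype G.E] [DecidableEq G.V]
    (P : G.V → ι) (a : G.V) :
    ModelWithCorners ℝ (EE (P a) × ((γ : inEdges G a) → EE (P (G.src γ.1))))
      (ModelProd (HH (P a)) (ModelPi fun γ : inEdges G a => HH (P (G.src γ.1)))) :=
  (II (P a)).prod (ModelWithCorners.pi fun γ : inEdges G a => II (P (G.src γ.1)))

/-- Smoothness of an element of `Ctrl(P I(a) → P a)`, as a map into the tangent bundle.
`Ctrl(P I(a) → P a)` is the vector space of smooth maps `F : P I(a) → T P(a)` with
`F q ∈ T_{p(q)} P(a)`, i.e. the subspace of smooth elements of `Raw`. -/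
def IsSmoothCtrl (G : DGraph) [Fintype G.E] [DecidableEq G.V] (P : G.V → ι) (a : G.V)
    (F : Raw II MM G P a) : Prop :=
  ContMDiff (PInModel II G P a) (II (P a)).tangent (⊤ : ℕ∞)
    (fun q => Bundle.TotalSpace.mk q.1 (F q) :
      PIn MM G P a → TangentBundle (II (P a)) (MM (P a)))

/-- The map `P φ : P I(a') → P I(a)` of total phase spaces of input networks induced
(contravariantly) by an isomorphism `φ` of input networks. -/
def phaseIn {G : DGraph} {P : G.V → ι} {G' : DGraph} {P' : G'.V → ι} {a : G.V}
    {a' : G'.V} (σ : InputIso G P G' P' a a') : PIn MM G' P' a' → PIn MM G P a :=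
  fun q => (cast (congrArg MM σ.hr) q.1,
    fun γ => cast (congrArg MM (σ.hl γ)) (q.2 (σ.e γ)))

/-- Transport of tangent vectors along an equality of phase space indices; this is the
differential of the induced diffeomorphism of phase spaces (a `cast`). -/
def tcast {i j : ι} (h : i = j) {x : MM i} {y : MM j} (v : TangentSpace (II i) x) :
    TangentSpace (II j) y :=
  cast (congrArg EE h) v

/-- The map `Ctrl(φ) : Ctrl(P I(a) → P a) → Ctrl(P I(a') → P a')`,
`Ctrl(φ)(F) = D(P(φ|ₐ))⁻¹ ∘ F ∘ P φ`, induced by an isomorphism `φ` of input networks: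
here `P(φ|ₐ) : P(a') → P(a)` is the diffeomorphism (a `cast`) induced by the restriction
of `φ` to the root, and its differential is `tcast`. -/
def ctrlMap {G : DGraph} {P : G.V → ι} {G' : DGraph} {P' : G'.V → ι} {a : G.V}
    {a' : G'.V} (σ : InputIso G P G' P' a a') :
    Raw II MM G P a → Raw II MM G' P' a' :=
  fun F q' => tcast II MM σ.hr.symm (F (phaseIn MM σ q'))

/-- A virtual vector field on the network `(G, P)`, i.e. a section of the control bundle,
is smooth if each of its components is a smooth control system. -/
def IsSmoothSec (G : DGraph) [Fintype G.E] [DecidableEq G.V] (P : G.V → ι)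
    (w : ∀ a, Raw II MM G P a) : Prop :=
  ∀ a, IsSmoothCtrl II MM G P a (w a)

/-- A virtual vector field `w` on `(G, P)` is invariant under the symmetry groupoid if
`Ctrl(σ) (w a) = w b` for every isomorphism `σ : (I(a), P∘ξ_a) → (I(b), P∘ξ_b)` of input
networks.  Together with smoothness this cuts out `V(G,P) ⊆ S(G,P)`. -/
def IsInvariantSec (G : DGraph) (P : G.V → ι) (w : ∀ a, Raw II MM G P a) : Prop :=
  ∀ (a b : G.V) (σ : InputIso G P G P a b), ctrlMap II MM σ (w a) = w b

/-- The isomorphism of input networks `φ_a : (I(a), P∘ξ_a) → (I(φ(a)), P'∘ξ_{φ(a)})`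
induced by a fibration of networks `φ : (G,P) → (G',P')`. -/
noncomputable def fibIso {G G' : DGraph} (φ : GraphMap G G') (hφ : φ.IsFibration)
    {P : G.V → ι} {P' : G'.V → ι} (h : ∀ a, P' (φ.vmap a) = P a) (a : G.V) :
    InputIso G P G' P' a (φ.vmap a) where
  e :=
    { toFun := fun γ => ⟨φ.emap γ.1, by rw [φ.tgt_eq, γ.2]⟩
      invFun := fun γ' => ⟨Exists.choose (hφ a γ'.1 γ'.2),
        (Exists.choose_spec (hφ a γ'.1 γ'.2)).1.1⟩
      left_inv := fun γ => Subtype.ext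
        (((Exists.choose_spec (hφ a (φ.emap γ.1) (by rw [φ.tgt_eq, γ.2]))).2 γ.1
          ⟨γ.2, rfl⟩).symm)
      right_inv := fun γ' => Subtype.ext
        (Exists.choose_spec (hφ a γ'.1 γ'.2)).1.2 }
  hr := h a
  hl := fun γ => by
    show P' (G'.src (φ.emap γ.1)) = P (G.src γ.1)
    rw [φ.src_eq]; exact h _

/-- The pullback map `φ* : S(G',P') → S(G,P)` of virtual vector fields along a fibration
of networks `φ`, defined by `(φ* w')_a = Ctrl(φ_a)⁻¹ (w'_{φ(a)})`. -/
noncomputable def pullbackVF {G G' : DGraph} (φ : GraphMap G G') (hφ : φ.IsFibration)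
    {P : G.V → ι} {P' : G'.V → ι} (h : ∀ a, P' (φ.vmap a) = P a)
    (w' : ∀ a', Raw II MM G' P' a') : ∀ a, Raw II MM G P a :=
  fun a => ctrlMap II MM (fibIso φ hφ h a).inv (w' (φ.vmap a))

/-- The essential image of a fibration of networks `φ : (G,P) → (G',P')`: the set of
vertices `a'` of `G'` whose input network is isomorphic to the input network of `φ(a)`
for some vertex `a` of `G`. -/
def essImage {ι : Type} {G G' : DGraph} (φ : GraphMap G G') (P' : G'.V → ι) : Set G'.V :=
  {a' : G'.V | ∃ a : G.V, Nonempty (InputIso G' P' G' P' a' (φ.vmap a))}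

/-!
An invariant section `w` of `(G, P)` can be transported to every vertex `a'` of `G'` whose
input network is isomorphic to that of some vertex `a` of `G`: by invariance, `Ctrl(σ) (w a)`
does not depend on the choice of `σ : I(a) ≅ I(a')`. Extending by zero elsewhere gives a smooth
invariant section of `(G', P')`, and its pullback is `w` because `φ_a : I(a) ≅ I(φ(a))` is one
of the admissible `σ`. For the kernel, `(φ* w')_a = 0` iff `w'_{φ(a)} = 0`, and invariance of
`w'` spreads this vanishing over the whole essential image.
-/

section InputIsoAlgebra

variable {G G' : DGraph} {P : G.V → ι} {P' : G'.V → ι} {a : G.V} {a' : G'.V}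

@[ext]
theorem InputIso.ext {σ τ : InputIso G P G' P' a a'} (h : σ.e = τ.e) : σ = τ := by
  cases σ; cases τ; cases h; rfl

@[simp]
theorem InputIso.comp_inv (σ : InputIso G P G' P' a a') : σ.comp σ.inv = InputIso.refl G P a := by
  ext γ; simp [InputIso.comp, InputIso.inv, InputIso.refl]

end InputIsoAlgebra

section ControlMaps

omit [∀ i, IsManifold (II i) ((⊤ : ℕ∞) : WithTop ℕ∞) (MM i)]

variable {G G' G'' : DGraph} {P : G.V → ι} {P' : G'.V → ι} {P'' : G''.V → ι}
  {a : G.V} {a' : G'.V} {a'' : G''.V}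

omit [∀ i, TopologicalSpace (MM i)] in
theorem phaseIn_comp (σ : InputIso G P G' P' a a') (σ' : InputIso G' P' G'' P'' a' a'') :
    phaseIn MM (σ.comp σ') = phaseIn MM σ ∘ phaseIn MM σ' := by
  funext q
  refine Prod.ext ?_ (funext fun γ => ?_) <;> simp [phaseIn, InputIso.comp]

theorem ctrlMap_comp (σ : InputIso G P G' P' a a') (σ' : InputIso G' P' G'' P'' a' a'')
    (F : Raw II MM G P a) :
    ctrlMap II MM (σ.comp σ') F = ctrlMap II MM σ' (ctrlMap II MM σ F) := by
  funext q
  refine eq_of_heq ((cast_heq _ _).trans ?_)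
  rw [phaseIn_comp]
  exact ((cast_heq _ _).trans (cast_heq _ _)).symm

@[simp]
theorem ctrlMap_refl (F : Raw II MM G P a) : ctrlMap II MM (InputIso.refl G P a) F = F := rfl

@[simp]
theorem ctrlMap_inv_ctrlMap (σ : InputIso G P G' P' a a') (F : Raw II MM G P a) :
    ctrlMap II MM σ.inv (ctrlMap II MM σ F) = F := by
  rw [← ctrlMap_comp, InputIso.comp_inv, ctrlMap_refl]

theorem tcast_zero {i j : ι} (h : i = j) {x : MM i} {y : MM j} :
    tcast II MM h (0 : TangentSpace (II i) x) = (0 : TangentSpace (II j) y) := by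
  subst h; rfl

@[simp]
theorem ctrlMap_zero (σ : InputIso G P G' P' a a') : ctrlMap II MM σ (0 : Raw II MM G P a) = 0 :=
  funext fun _ => tcast_zero II MM σ.hr.symm

@[simp]
theorem ctrlMap_eq_zero_iff (σ : InputIso G P G' P' a a') {F : Raw II MM G P a} :
    ctrlMap II MM σ F = 0 ↔ F = 0 := by
  refine ⟨fun h => ?_, fun h => h ▸ ctrlMap_zero II MM σ⟩
  rw [← ctrlMap_inv_ctrlMap II MM σ F, h, ctrlMap_zero]

end ControlMaps

section Smoothness

omit [∀ i, IsManifold (II i) ((⊤ : ℕ∞) : WithTop ℕ∞) (MM i)]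

variable {n : WithTop ℕ∞}

theorem contMDiff_cast {i j : ι} (h : i = j) :
    ContMDiff (II i) (II j) n (fun x : MM i => cast (congrArg MM h) x) := by
  subst h; exact contMDiff_id

theorem contMDiff_pi_cast {κ : Type} [Fintype κ] {f g : κ → ι} (h : ∀ k, f k = g k) :
    ContMDiff (ModelWithCorners.pi fun k => II (f k)) (ModelWithCorners.pi fun k => II (g k))
      n (fun (q : ∀ k, MM (f k)) k => cast (congrArg MM (h k)) (q k)) := by
  obtain rfl : f = g := funext h
  exact contMDiff_id

theorem contMDiff_pi_reindex {κ κ' : Type} [Fintype κ] [Fintype κ'] (e : κ → κ') (f : κ' → ι) :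
    ContMDiff (ModelWithCorners.pi fun k' => II (f k')) (ModelWithCorners.pi fun k => II (f (e k)))
      n (fun (q : ∀ k', MM (f k')) k => q (e k)) := by
  intro x
  rw [← contMDiffWithinAt_univ, contMDiffWithinAt_iff']
  refine ⟨(continuous_pi fun k => continuous_apply (e k)).continuousWithinAt, ?_⟩
  set I : ModelWithCorners ℝ (∀ k', EE (f k')) (ModelPi fun k' => HH (f k')) :=
    ModelWithCorners.pi fun k' => II (f k')
  have mem_target : ∀ y ∈ (extChartAt I x).target, ∀ k',
      y k' ∈ (extChartAt (II (f k')) (x k')).target := by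
    intro y hy k'
    rw [extChartAt_target, piChartedSpace_chartAt] at hy
    rw [extChartAt_target]
    obtain ⟨hy₁, z, rfl⟩ := hy
    exact ⟨hy₁ k' trivial, z k', rfl⟩
  -- in the product charts the map is the linear projection `y ↦ (y (e k))ₖ`
  set L := ContinuousLinearMap.pi fun k =>
    ContinuousLinearMap.proj (R := ℝ) (φ := fun k' => EE (f k')) (e k)
  have in_charts : ∀ y ∈ (extChartAt I x).target,
      extChartAt (ModelWithCorners.pi fun k => II (f (e k))) (fun k => x (e k))
        (fun k => (extChartAt I x).symm y (e k)) = L y := fun y hy =>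
    funext fun k => (extChartAt (II (f (e k))) (x (e k))).right_inv (mem_target y hy (e k))
  exact L.contDiff.contDiffAt.contDiffWithinAt.congr (fun y hy => in_charts y hy.1)
    (in_charts _ ((extChartAt I x).map_source (mem_extChartAt_source x)))

end Smoothness

theorem contMDiff_tangent_cast {i j : ι} (h : i = j) :
    ContMDiff (II i).tangent (II j).tangent ((⊤ : ℕ∞) : WithTop ℕ∞)
      (fun p : TangentBundle (II i) (MM i) =>
        (⟨cast (congrArg MM h) p.1, tcast II MM h p.2⟩ : TangentBundle (II j) (MM j))) := by
  subst h; exact contMDiff_id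

section SmoothControl

variable {G G' : DGraph} [Fintype G.E] [DecidableEq G.V] [Fintype G'.E] [DecidableEq G'.V]
  {P : G.V → ι} {P' : G'.V → ι} {a : G.V} {a' : G'.V}

omit [∀ i, IsManifold (II i) ((⊤ : ℕ∞) : WithTop ℕ∞) (MM i)] in
theorem contMDiff_phaseIn {n : WithTop ℕ∞} (σ : InputIso G P G' P' a a') :
    ContMDiff (PInModel II G' P' a') (PInModel II G P a) n (phaseIn MM σ) :=
  ((contMDiff_cast II MM σ.hr).comp contMDiff_fst).prodMk <|
    (contMDiff_pi_cast II MM σ.hl).comp <|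
      (contMDiff_pi_reindex II MM σ.e fun γ' => P' (G'.src γ'.1)).comp contMDiff_snd

theorem isSmoothCtrl_ctrlMap (σ : InputIso G P G' P' a a') {F : Raw II MM G P a}
    (hF : IsSmoothCtrl II MM G P a F) : IsSmoothCtrl II MM G' P' a' (ctrlMap II MM σ F) := by
  have hroot : ∀ q' : PIn MM G' P' a', q'.1 = cast (congrArg MM σ.hr.symm) (phaseIn MM σ q').1 :=
    fun q' => by simp [phaseIn]
  unfold IsSmoothCtrl
  convert (contMDiff_tangent_cast II MM σ.hr.symm).comp (hF.comp (contMDiff_phaseIn II MM σ))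
    using 2 with q'
  exact congrArg (Bundle.TotalSpace.mk' _ · (ctrlMap II MM σ F q')) (hroot q')

theorem isSmoothCtrl_zero (a : G.V) : IsSmoothCtrl II MM G P a 0 :=
  (Bundle.contMDiff_zeroSection ℝ (TangentSpace (II (P a)) : MM (P a) → Type _)).comp
    contMDiff_fst

end SmoothControl

section Extension

variable {G : DGraph} {P : G.V → ι}

open Classical in
noncomputable def extendSec (G' : DGraph) (P' : G'.V → ι) (w : ∀ a, Raw II MM G P a)
    (a' : G'.V) : Raw II MM G' P' a' :=
  if H : ∃ a, Nonempty (InputIso G P G' P' a a') then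
    ctrlMap II MM H.choose_spec.some (w H.choose)
  else 0

variable {G' : DGraph} {P' : G'.V → ι} {w : ∀ a, Raw II MM G P a}

omit [∀ i, IsManifold (II i) ((⊤ : ℕ∞) : WithTop ℕ∞) (MM i)]

theorem IsInvariantSec.ctrlMap_eq (hw : IsInvariantSec II MM G P w) {a b : G.V} {a' : G'.V}
    (σ : InputIso G P G' P' a a') (τ : InputIso G P G' P' b a') :
    ctrlMap II MM σ (w a) = ctrlMap II MM τ (w b) := by
  rw [← hw b a (τ.comp σ.inv), ← ctrlMap_comp]
  congr 1
  ext γ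
  simp [InputIso.comp, InputIso.inv]

theorem IsInvariantSec.apply_eq_zero_iff (hw : IsInvariantSec II MM G P w) {a b : G.V}
    (σ : InputIso G P G P a b) : w a = 0 ↔ w b = 0 := by
  rw [← hw a b σ, ctrlMap_eq_zero_iff]

theorem extendSec_apply (hw : IsInvariantSec II MM G P w) {a : G.V} {a' : G'.V}
    (σ : InputIso G P G' P' a a') : extendSec II MM G' P' w a' = ctrlMap II MM σ (w a) := by
  have H : ∃ a, Nonempty (InputIso G P G' P' a a') := ⟨a, ⟨σ⟩⟩
  rw [extendSec, dif_pos H]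
  exact hw.ctrlMap_eq II MM _ _

theorem extendSec_of_not_exists {a' : G'.V} (H : ¬∃ a, Nonempty (InputIso G P G' P' a a')) :
    extendSec II MM G' P' w a' = 0 :=
  dif_neg H

theorem isInvariantSec_extendSec (hw : IsInvariantSec II MM G P w) :
    IsInvariantSec II MM G' P' (extendSec II MM G' P' w) := by
  intro a' b' τ
  by_cases H : ∃ a, Nonempty (InputIso G P G' P' a a')
  · obtain ⟨a, ⟨σ⟩⟩ := H
    rw [extendSec_apply II MM hw σ, extendSec_apply II MM hw (σ.comp τ), ctrlMap_comp]
  · have Hb : ¬∃ b, Nonempty (InputIso G P G' P' b b') :=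
      fun ⟨b, ⟨ρ⟩⟩ => H ⟨b, ⟨ρ.comp τ.inv⟩⟩
    rw [extendSec_of_not_exists II MM H, extendSec_of_not_exists II MM Hb, ctrlMap_zero]

theorem pullbackVF_extendSec (φ : GraphMap G G') (hφ : φ.IsFibration)
    (h : ∀ a, P' (φ.vmap a) = P a) (hw : IsInvariantSec II MM G P w) :
    pullbackVF II MM φ hφ h (extendSec II MM G' P' w) = w :=
  funext fun a => by
    rw [pullbackVF, extendSec_apply II MM hw (fibIso φ hφ h a), ctrlMap_inv_ctrlMap]

end Extension

theorem isSmoothSec_extendSec {G G' : DGraph} [Fintype G.E] [DecidableEq G.V] [Fintype G'.E]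
    [DecidableEq G'.V] {P : G.V → ι} {P' : G'.V → ι} {w : ∀ a, Raw II MM G P a}
    (hw : IsSmoothSec II MM G P w) : IsSmoothSec II MM G' P' (extendSec II MM G' P' w) := by
  intro a'
  by_cases H : ∃ a, Nonempty (InputIso G P G' P' a a')
  · rw [extendSec, dif_pos H]
    exact isSmoothCtrl_ctrlMap II MM _ (hw _)
  · rw [extendSec_of_not_exists II MM H]
    exact isSmoothCtrl_zero II MM a'

section Kernel

omit [∀ i, IsManifold (II i) ((⊤ : ℕ∞) : WithTop ℕ∞) (MM i)]

variable {G G' : DGraph} {P : G.V → ι} {P' : G'.V → ι}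

theorem pullbackVF_eq_zero_iff (φ : GraphMap G G') (hφ : φ.IsFibration)
    (h : ∀ a, P' (φ.vmap a) = P a) (w' : ∀ a', Raw II MM G' P' a') :
    pullbackVF II MM φ hφ h w' = 0 ↔ ∀ a, w' (φ.vmap a) = 0 := by
  rw [funext_iff]
  exact forall_congr' fun a => ctrlMap_eq_zero_iff II MM _

theorem IsInvariantSec.forall_essImage_eq_zero_iff {w' : ∀ a', Raw II MM G' P' a'}
    (hw' : IsInvariantSec II MM G' P' w') (φ : GraphMap G G') :
    (∀ a', a' ∈ essImage φ P' → w' a' = 0) ↔ ∀ a, w' (φ.vmap a) = 0 := by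
  refine ⟨fun H a => H _ ⟨a, ⟨InputIso.refl G' P' (φ.vmap a)⟩⟩, ?_⟩
  rintro H a' ⟨a, ⟨σ⟩⟩
  exact (hw'.apply_eq_zero_iff II MM σ).2 (H a)

end Kernel

/-- **Surjectivity and kernel of the pullback on invariant virtual vector fields.**
For a fibration of networks `φ : (G,P) → (G',P')`, the pullback
`φ* : V(G',P') → V(G,P)` is surjective, and its kernel consists exactly of the invariant
virtual vector fields vanishing on the essential image of `φ`. -/
theorem pullback_surjective_kernel
    {G G' : DGraph} [Fintype G.E] [DecidableEq G.V] [Fintype G'.E] [DecidableEq G'.V]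
    (φ : GraphMap G G') (hφ : φ.IsFibration)
    {P : G.V → ι} {P' : G'.V → ι} (h : ∀ a, P' (φ.vmap a) = P a) :
    (∀ w : ∀ a, Raw II MM G P a,
      IsSmoothSec II MM G P w → IsInvariantSec II MM G P w →
        ∃ w' : ∀ a', Raw II MM G' P' a',
          (IsSmoothSec II MM G' P' w' ∧ IsInvariantSec II MM G' P' w') ∧
            pullbackVF II MM φ hφ h w' = w) ∧
    (∀ w' : ∀ a', Raw II MM G' P' a',
      IsSmoothSec II MM G' P' w' → IsInvariantSec II MM G' P' w' →
        (pullbackVF II MM φ hφ h w' = 0 ↔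
          ∀ a' ∈ essImage φ P', w' a' = 0)) := by
  refine ⟨fun w hs hi => ⟨extendSec II MM G' P' w, ?_, pullbackVF_extendSec II MM φ hφ h hi⟩,
    fun w' _ hi' => ?_⟩
  · exact ⟨isSmoothSec_extendSec II MM hs, isInvariantSec_extendSec II MM hi⟩
  · rw [pullbackVF_eq_zero_iff, hi'.forall_essImage_eq_zero_iff]
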